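/- Suppose α2·β2 > α1·β1, and suppose in addition that either α2 ≤ β1, or 1/α1 + 1/α2 ≥ 1/β1 + 1/β2. Set y0 = δ^((1 + β1/β2)/(1 + α2/α1)). Then δ < y0 < 1, and the three points w0 = (1, y0; E), w1 = (y0^(α2/β1), 1; R), w2 = (δ^(−α1/β2)·y0^(α2/β1), δ; S) satisfy g(w0) = w1, g(w1) = w2, and g(w2) = w0. In particular (1, y0; E) lies on a period-two orbit of the first-return map on Σ (a period-three orbit of g) of type E → R → S → E. -/
import Mathlib


/-- The discrete state of a cow: eating, resting (lying down), or standing. -/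
inductive CowState
  | E | R | S
deriving DecidableEq

open CowState

/-- The Poincaré map `g` of the single-cow model, acting on points
`(x, y; θ)` of the boundary of the square `[δ,1]²` together with a state label.
Powers are real powers (`Real.rpow`). -/
noncomputable def g (α1 α2 β1 β2 δ : ℝ) : ℝ × ℝ × CowState → ℝ × ℝ × CowState
  | (_x, y, .E) =>
      if δ ^ (β1 / α2) ≤ y then (y ^ (α2 / β1), 1, R)
      else (δ, δ ^ (-(β1 / α2)) * y, S)
  | (x, _y, .R) =>
      if δ ^ (α1 / β2) ≤ x then (1, x ^ (β2 / α1), E)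
      else (δ ^ (-(α1 / β2)) * x, δ, S)
  | (x, y, .S) =>
      if x = δ then
        -- on the edge `x = δ`
        (if y ≤ δ ^ (β1 / α1) then (1, δ ^ (-(β1 / α1)) * y, E)
         else (y ^ (-(α1 / β1)) * δ, 1, R))
      else
        -- on the edge `y = δ`
        (if δ ^ (α1 / β1) ≤ x then (1, x ^ (-(β1 / α1)) * δ, E)
         else (δ ^ (-(α1 / β1)) * x, 1, R))

/-- The Poincaré section `Σ = {(1,y;E) : δ ≤ y ≤ 1} ∪ {(x,1;R) : δ ≤ x < 1}`. -/
def inSigma (δ : ℝ) : ℝ × ℝ × CowState → Prop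
  | (x, y, .E) => x = 1 ∧ δ ≤ y ∧ y ≤ 1
  | (x, y, .R) => δ ≤ x ∧ x < 1 ∧ y = 1
  | (_, _, .S) => False

/-- The first-return map `f` on the Poincaré section `Σ`:
`f(w) = g(w)` if `g(w) ∈ Σ`, and `f(w) = g(g(w))` otherwise. -/
noncomputable def f (α1 α2 β1 β2 δ : ℝ) (w : ℝ × ℝ × CowState) : ℝ × ℝ × CowState := by
  classical
  exact if inSigma δ (g α1 α2 β1 β2 δ w) then g α1 α2 β1 β2 δ w
        else g α1 α2 β1 β2 δ (g α1 α2 β1 β2 δ w)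

/-- Case B: if `α2·β2 > α1·β1` and, in addition, either
`α2 ≤ β1` or `1/α1 + 1/α2 ≥ 1/β1 + 1/β2`, then with
`y0 = δ^((1+β1/β2)/(1+α2/α1))` one has `δ < y0 < 1` and the three points
`w0 = (1,y0;E)`, `w1 = (y0^(α2/β1),1;R)`, `w2 = (δ^(−α1/β2)·y0^(α2/β1),δ;S)`
form a cycle of `g`: `g(w0) = w1`, `g(w1) = w2`, `g(w2) = w0`.  In particular
`(1,y0;E)` lies on a period-two orbit of the first-return map `f` on `Σ`. -/
theorem period_two_orbit_case_B_exists
    (α1 α2 β1 β2 δ : ℝ)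
    (hα1 : 0 < α1) (hα2 : 0 < α2) (hβ1 : 0 < β1) (hβ2 : 0 < β2)
    (hδ0 : 0 < δ) (hδ1 : δ < 1)
    (hgt : α1 * β1 < α2 * β2)
    (hcase : α2 ≤ β1 ∨ 1 / β1 + 1 / β2 ≤ 1 / α1 + 1 / α2)
    (y0 : ℝ) (hy0 : y0 = δ ^ ((1 + β1 / β2) / (1 + α2 / α1))) :
    δ < y0 ∧ y0 < 1 ∧
    g α1 α2 β1 β2 δ (1, y0, E) = (y0 ^ (α2 / β1), 1, R) ∧
    g α1 α2 β1 β2 δ (y0 ^ (α2 / β1), 1, R)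
      = (δ ^ (-(α1 / β2)) * y0 ^ (α2 / β1), δ, S) ∧
    g α1 α2 β1 β2 δ (δ ^ (-(α1 / β2)) * y0 ^ (α2 / β1), δ, S) = (1, y0, E) ∧
    f α1 α2 β1 β2 δ (f α1 α2 β1 β2 δ (1, y0, E)) = (1, y0, E) := by
  have hβ1' : β1 ≠ 0 := hβ1.ne'
  have hβ2' : β2 ≠ 0 := hβ2.ne'
  have hα1' : α1 ≠ 0 := hα1.ne'
  have hα2' : α2 ≠ 0 := hα2.ne'
  have hα12 : (0:ℝ) < α1 + α2 := by linarith
  set e : ℝ := (1 + β1 / β2) / (1 + α2 / α1) with he_def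
  have he : e = α1 * (β1 + β2) / (β2 * (α1 + α2)) := by
    rw [he_def]; field_simp; ring
  -- the case hypothesis as a polynomial inequality (second case)
  have hpoly : α2 ≤ β1 ∨ α1 * α2 * (β1 + β2) ≤ β1 * β2 * (α1 + α2) := by
    rcases hcase with h | h
    · exact Or.inl h
    · right
      rw [div_add_div _ _ hβ1' hβ2', div_add_div _ _ hα1' hα2',
        div_le_div_iff₀ (by positivity) (by positivity)] at h
      nlinarith [h]
  have he_pos : 0 < e := by rw [he]; positivity
  have he_lt1 : e < 1 := by
    rw [he, div_lt_one (by positivity)]; nlinarith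
  -- e ≤ β1/α2
  have h1 : e ≤ β1 / α2 := by
    rcases hpoly with h | h
    · refine he_lt1.le.trans ?_
      rw [le_div_iff₀ hα2]; linarith
    · rw [he, div_le_div_iff₀ (by positivity) hα2]; nlinarith
  have h1' : e * (α2 / β1) ≤ 1 := by
    rw [le_div_iff₀ hα2] at h1
    rw [← sub_nonneg]
    have : 1 - e * (α2 / β1) = (β1 - e * α2) / β1 := by field_simp
    rw [this]
    exact div_nonneg (by linarith) hβ1.le
  have h1pos : 0 < e * (α2 / β1) := by positivity
  -- the exponent c of x2
  set c : ℝ := e * (α2 / β1) - α1 / β2 with hc_def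
  have hc : c = α1 * (α2 * β2 - α1 * β1) / (β1 * β2 * (α1 + α2)) := by
    rw [hc_def, he]; field_simp; ring
  have hc_lt1 : c < 1 := by
    rw [hc, div_lt_one (by positivity)]
    rcases hpoly with h | h
    · nlinarith [mul_le_mul_of_nonneg_left h (by positivity : (0:ℝ) ≤ α1 * β2),
        mul_pos (mul_pos hα1 hα1) hβ1, mul_pos hα2 (mul_pos hβ1 hβ2)]
    · nlinarith [mul_pos (mul_pos hα1 hα2) hβ1, mul_pos (mul_pos hα1 hα1) hβ1]
  have hc_lt : c < α1 / β1 := by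
    rw [hc, div_lt_div_iff₀ (by positivity) hβ1]
    nlinarith [mul_pos (mul_pos hα1 hα1) (mul_pos hβ1 hβ1),
      mul_pos (mul_pos hα1 hα1) (mul_pos hβ1 hβ2)]
  have h5 : c * -(β1 / α1) + 1 = e := by
    rw [hc, he]; field_simp; ring
  -- basic rpow facts
  have hylt1 : y0 < 1 := by
    rw [hy0]; exact Real.rpow_lt_one hδ0.le hδ1 he_pos
  have hδlty : δ < y0 := by
    rw [hy0]
    nth_rewrite 1 [show δ = δ ^ (1:ℝ) from (Real.rpow_one δ).symm]
    exact (Real.rpow_lt_rpow_left_iff_of_base_lt_one hδ0 hδ1).mpr he_lt1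
  -- x1 = y0 ^ (α2/β1)
  have hx1 : y0 ^ (α2 / β1) = δ ^ (e * (α2 / β1)) := by
    rw [hy0, ← Real.rpow_mul hδ0.le]
  -- x2 = δ ^ c
  have hx2 : δ ^ (-(α1 / β2)) * y0 ^ (α2 / β1) = δ ^ c := by
    rw [hx1, ← Real.rpow_add hδ0, hc_def]; ring_nf
  -- g(w0) = w1
  have hg0 : g α1 α2 β1 β2 δ (1, y0, E) = (y0 ^ (α2 / β1), 1, R) := by
    simp only [g]
    rw [if_pos]
    rw [hy0]
    exact (Real.rpow_le_rpow_left_iff_of_base_lt_one hδ0 hδ1).mpr h1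
  -- g(w1) = w2
  have hg1 : g α1 α2 β1 β2 δ (y0 ^ (α2 / β1), 1, R)
      = (δ ^ (-(α1 / β2)) * y0 ^ (α2 / β1), δ, S) := by
    simp only [g]
    rw [if_neg]
    rw [hx1, not_le]
    apply (Real.rpow_lt_rpow_left_iff_of_base_lt_one hδ0 hδ1).mpr
    have : 0 < c := by
      rw [hc]; exact div_pos (by nlinarith) (by positivity)
    rw [hc_def] at this; linarith
  -- g(w2) = w0
  have hg2 : g α1 α2 β1 β2 δ (δ ^ (-(α1 / β2)) * y0 ^ (α2 / β1), δ, S)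
      = (1, y0, E) := by
    simp only [g]
    rw [if_neg, if_pos]
    · refine Prod.ext rfl (Prod.ext ?_ rfl)
      show (δ ^ (-(α1 / β2)) * y0 ^ (α2 / β1)) ^ (-(β1 / α1)) * δ = y0
      rw [hx2, ← Real.rpow_mul hδ0.le]
      nth_rewrite 2 [show δ = δ ^ (1:ℝ) from (Real.rpow_one δ).symm]
      rw [← Real.rpow_add hδ0, h5, hy0]
    · rw [hx2]
      exact (Real.rpow_le_rpow_left_iff_of_base_lt_one hδ0 hδ1).mpr hc_lt.le
    · rw [hx2]
      have : δ < δ ^ c := by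
        nth_rewrite 1 [show δ = δ ^ (1:ℝ) from (Real.rpow_one δ).symm]
        exact (Real.rpow_lt_rpow_left_iff_of_base_lt_one hδ0 hδ1).mpr hc_lt1
      exact this.ne'
  refine ⟨hδlty, hylt1, hg0, hg1, hg2, ?_⟩
  -- the first-return map statement
  have hf0 : f α1 α2 β1 β2 δ (1, y0, E) = (y0 ^ (α2 / β1), 1, R) := by
    rw [f, hg0, if_pos]
    refine ⟨?_, ?_, rfl⟩
    · rw [hx1]
      nth_rewrite 1 [show δ = δ ^ (1:ℝ) from (Real.rpow_one δ).symm]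
      exact (Real.rpow_le_rpow_left_iff_of_base_lt_one hδ0 hδ1).mpr h1'
    · rw [hx1]; exact Real.rpow_lt_one hδ0.le hδ1 h1pos
  rw [hf0, f, hg1,
    if_neg (show ¬ inSigma δ (δ ^ (-(α1 / β2)) * y0 ^ (α2 / β1), δ, S) from fun h => h)]
  exact hg2
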